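/- arXiv:2011.03232 — 6 statements merged into one kernel-verified Lean document; each statement's English description precedes it below -/
import Mathlib

section
/- Let K ≥ 1, let r_min ≥ 0, set θ = 2^{r_min} − 1, let Ψ > 0, and let λ_1, …, λ_K be positive reals. Define ρ_{1,min}, …, ρ_{K,min} recursively by ρ_{i,min} = θ·(Σ_{j=1}^{i-1} ρ_{j,min} + Ψ/λ_i). Then the total minimum transmit SNR satisfies Σ_{i=1}^{K} ρ_{i,min} = (2^{r_min} − 1) · Σ_{i=0}^{K-1} 2^{i·r_min} · Ψ/λ_{K-i}. -/
/-!
Writing `S n = ∑_{i ≤ n} ρ_{i,min}` and `θ = 2^{r_min} − 1`, the recurrence reads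
`S (n+1) = S n + θ (S n + Ψ/λ_{n+1}) = 2^{r_min} S n + θ Ψ/λ_{n+1}`, a first-order linear
recurrence with `S 0 = 0`; unrolling it gives the closed form.
-/

open Finset

section LinearRecurrence

variable {R : Type*} [CommSemiring R]

theorem eq_sum_pow_mul_of_succ_eq_mul_add (q : R) (b S : ℕ → R) (n : ℕ) (h0 : S 0 = 0)
    (hS : ∀ m < n, S (m + 1) = q * S m + b (m + 1)) :
    S n = ∑ i ∈ range n, q ^ i * b (n - i) := by
  induction n with
  | zero => simp [h0]
  | succ n ih =>
    rw [hS n n.lt_succ_self, ih fun m hm => hS m (hm.trans n.lt_succ_self),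
      sum_range_succ', mul_sum]
    simp only [pow_succ', mul_assoc, Nat.add_sub_add_right, pow_zero, one_mul, Nat.sub_zero]

end LinearRecurrence

section PartialSums

variable {R : Type*} [CommRing R]

theorem sum_Icc_succ_eq_of_eq_mul_sum_add (θ : R) (c x : ℕ → R) {m : ℕ}
    (hx : x (m + 1) = θ * (∑ j ∈ Icc 1 m, x j + c (m + 1))) :
    ∑ i ∈ Icc 1 (m + 1), x i = (1 + θ) * ∑ i ∈ Icc 1 m, x i + θ * c (m + 1) := by
  rw [sum_Icc_succ_top (Nat.le_add_left 1 m), hx]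
  ring

theorem sum_Icc_eq_of_eq_mul_sum_add (θ : R) (c x : ℕ → R) (n : ℕ)
    (hx : ∀ i, 1 ≤ i → i ≤ n → x i = θ * (∑ j ∈ Icc 1 (i - 1), x j + c i)) :
    ∑ i ∈ Icc 1 n, x i = θ * ∑ i ∈ range n, (1 + θ) ^ i * c (n - i) := by
  rw [mul_sum]
  simp only [mul_left_comm θ]
  refine eq_sum_pow_mul_of_succ_eq_mul_add (1 + θ) (fun i => θ * c i)
    (fun n => ∑ i ∈ Icc 1 n, x i) n (by simp) fun m hm => ?_
  exact sum_Icc_succ_eq_of_eq_mul_sum_add θ c x (hx (m + 1) m.succ_pos hm)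

end PartialSums

theorem stmt_1_general (K : ℕ) (rmin : ℝ)
    (Ψ : ℝ) (lam : ℕ → ℝ)
    (ρmin : ℕ → ℝ)
    (hρ : ∀ i, 1 ≤ i → i ≤ K →
      ρmin i = ((2:ℝ) ^ rmin - 1) * (∑ j ∈ Finset.Icc 1 (i - 1), ρmin j + Ψ / lam i)) :
    ∑ i ∈ Finset.Icc 1 K, ρmin i
      = ((2:ℝ) ^ rmin - 1) *
        ∑ i ∈ Finset.range K, (2:ℝ) ^ ((i : ℝ) * rmin) * (Ψ / lam (K - i)) := by
  have hpow : ∀ i : ℕ, (2:ℝ) ^ ((i : ℝ) * rmin) = (1 + ((2:ℝ) ^ rmin - 1)) ^ i := fun i => by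
    rw [add_sub_cancel, mul_comm, Real.rpow_mul_natCast zero_le_two]
  simp only [hpow]
  exact sum_Icc_eq_of_eq_mul_sum_add _ (fun i => Ψ / lam i) ρmin K hρ

/-- Proposition 1 (first part): the total minimum transmit SNR satisfies
`∑_{i=1}^K ρmin i = (2^rmin − 1) ∑_{i=0}^{K-1} 2^(i rmin) Ψ/λ_{K-i}`. -/
theorem stmt_1 (K : ℕ) (hK : 1 ≤ K) (rmin : ℝ) (hr : 0 ≤ rmin)
    (Ψ : ℝ) (hΨ : 0 < Ψ) (lam : ℕ → ℝ) (hlam : ∀ i, 1 ≤ i → i ≤ K → 0 < lam i)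
    (ρmin : ℕ → ℝ)
    (hρ : ∀ i, 1 ≤ i → i ≤ K →
      ρmin i = ((2:ℝ) ^ rmin - 1) * (∑ j ∈ Finset.Icc 1 (i - 1), ρmin j + Ψ / lam i)) :
    ∑ i ∈ Finset.Icc 1 K, ρmin i
      = ((2:ℝ) ^ rmin - 1) *
        ∑ i ∈ Finset.range K, (2:ℝ) ^ ((i : ℝ) * rmin) * (Ψ / lam (K - i)) :=
  stmt_1_general K rmin Ψ lam ρmin hρ
end

section
/- Let r_min ≥ 0, set θ = 2^{r_min} − 1, let Ψ > 0, let λ_1, …, λ_K be positive reals, let ρ_{1,min}, …, ρ_{K,min} satisfy ρ_{i,min} = θ·(Σ_{j=1}^{i-1} ρ_{j,min} + Ψ/λ_i), let Δρ_1, …, Δρ_K be nonnegative reals, and set ρ_j = ρ_{j,min} + Δρ_j. Then for every i, the excess rate of user i satisfies log₂(1 + ρ_i λ_i/(Σ_{j=1}^{i-1} ρ_j λ_i + Ψ)) − r_min = log₂(1 + (Δρ_i − θ·Σ_{j=1}^{i-1} Δρ_j) / (Σ_{j=1}^{i} ρ_{j,min} + Ψ/λ_i + 2^{r_min}·Σ_{j=1}^{i-1}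 Δρ_j)). -/
/-!
Write `θ = 2 ^ rmin - 1`, `S = ∑_{j<i} ρmin j`, `D = ∑_{j<i} Δρ j` and `c = Ψ / λᵢ`, so that
`ρmin i = θ (S + c)`. After dividing by `λᵢ`, the SINR argument of the left side is
`1 + ρᵢ / (S + D + c)`, while the denominator on the right is `S + ρmin i + c + 2 ^ rmin D`,
which collapses to `2 ^ rmin (S + D + c)`. Subtracting `rmin = logb 2 (2 ^ rmin)` therefore just
divides the argument by `2 ^ rmin`, and the identity is a rearrangement of numerators. The only
analytic input is that the arguments are positive: the recursion makes every `ρmin j`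
nonnegative because `θ ≥ 0`.
-/

open Finset Real

lemma nonneg_of_eq_mul_sum_add {K : ℕ} {θ : ℝ} (hθ : 0 ≤ θ) {x c : ℕ → ℝ}
    (hc : ∀ i, 1 ≤ i → i ≤ K → 0 ≤ c i)
    (hx : ∀ i, 1 ≤ i → i ≤ K → x i = θ * (∑ j ∈ Icc 1 (i - 1), x j + c i)) :
    ∀ i, 1 ≤ i → i ≤ K → 0 ≤ x i := by
  intro i
  induction i using Nat.strong_induction_on with
  | _ i ih =>
    intro hi hiK
    have hsum : 0 ≤ ∑ j ∈ Icc 1 (i - 1), x j :=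
      sum_nonneg fun j hj => by
        rw [mem_Icc] at hj
        exact ih j (by omega) hj.1 (by omega)
    rw [hx i hi hiK]
    exact mul_nonneg hθ (add_nonneg hsum (hc i hi hiK))

lemma Real.logb_sub_eq_logb_div_rpow {b x : ℝ} (hb : 0 < b) (hb₁ : b ≠ 1) (hx : x ≠ 0) (r : ℝ) :
    logb b x - r = logb b (x / b ^ r) := by
  rw [logb_div hx (rpow_pos_of_pos hb r).ne', logb_rpow hb hb₁]

lemma one_add_div_div_rpow_eq {r S D c Δ : ℝ} (hA : S + D + c ≠ 0) :
    (1 + ((2 ^ r - 1) * (S + c) + Δ) / (S + D + c)) / (2 : ℝ) ^ r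
      = 1 + (Δ - (2 ^ r - 1) * D) / (S + (2 ^ r - 1) * (S + c) + c + 2 ^ r * D) := by
  have hpow : (2 : ℝ) ^ r ≠ 0 := (rpow_pos_of_pos two_pos r).ne'
  have hden : S + (2 ^ r - 1) * (S + c) + c + 2 ^ r * D = 2 ^ r * (S + D + c) := by ring
  rw [hden]
  field_simp
  ring

/-- Unscaled excess-rate identity (A.5) of Proposition 1. -/
theorem stmt_4 (K : ℕ) (rmin : ℝ) (hr : 0 ≤ rmin) (Ψ : ℝ) (hΨ : 0 < Ψ)
    (lam : ℕ → ℝ) (hlam : ∀ i, 1 ≤ i → i ≤ K → 0 < lam i)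
    (ρmin : ℕ → ℝ)
    (hρmin : ∀ i, 1 ≤ i → i ≤ K →
      ρmin i = ((2:ℝ) ^ rmin - 1) * (∑ j ∈ Finset.Icc 1 (i - 1), ρmin j + Ψ / lam i))
    (Δρ : ℕ → ℝ) (hΔ : ∀ i, 1 ≤ i → i ≤ K → 0 ≤ Δρ i)
    (ρ : ℕ → ℝ) (hρ : ∀ j, ρ j = ρmin j + Δρ j) :
    ∀ i, 1 ≤ i → i ≤ K →
      Real.logb 2 (1 + ρ i * lam i / (∑ j ∈ Finset.Icc 1 (i - 1), ρ j * lam i + Ψ)) - rmin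
        = Real.logb 2 (1 +
            (Δρ i - ((2:ℝ) ^ rmin - 1) * ∑ j ∈ Finset.Icc 1 (i - 1), Δρ j)
              / (∑ j ∈ Finset.Icc 1 i, ρmin j + Ψ / lam i
                  + (2:ℝ) ^ rmin * ∑ j ∈ Finset.Icc 1 (i - 1), Δρ j)) := by
  intro i hi hiK
  have hθ : 0 ≤ (2 : ℝ) ^ rmin - 1 := sub_nonneg.2 (one_le_rpow one_le_two hr)
  have hρmin_nonneg := nonneg_of_eq_mul_sum_add hθ
    (fun j hj hjK => (div_pos hΨ (hlam j hj hjK)).le) hρmin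
  have hS : 0 ≤ ∑ j ∈ Icc 1 (i - 1), ρmin j :=
    sum_nonneg fun j hj => hρmin_nonneg j (mem_Icc.1 hj).1 (by grind)
  have hD : 0 ≤ ∑ j ∈ Icc 1 (i - 1), Δρ j :=
    sum_nonneg fun j hj => hΔ j (mem_Icc.1 hj).1 (by grind)
  have hlami := hlam i hi hiK
  have hc : 0 < Ψ / lam i := div_pos hΨ hlami
  have hρi : 0 ≤ ρ i := hρ i ▸ add_nonneg (hρmin_nonneg i hi hiK) (hΔ i hi hiK)
  have hsum_top : ∑ j ∈ Icc 1 i, ρmin j = ∑ j ∈ Icc 1 (i - 1), ρmin j + ρmin i := by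
    obtain ⟨k, rfl⟩ : ∃ k, i = k + 1 := ⟨i - 1, by omega⟩
    exact sum_Icc_succ_top (by omega) ρmin
  have hsinr : ρ i * lam i / (∑ j ∈ Icc 1 (i - 1), ρ j * lam i + Ψ)
      = ρ i / (∑ j ∈ Icc 1 (i - 1), ρmin j + ∑ j ∈ Icc 1 (i - 1), Δρ j + Ψ / lam i) := by
    rw [← sum_mul, sum_congr rfl fun j _ => hρ j, sum_add_distrib]
    field_simp
  rw [hsinr, logb_sub_eq_logb_div_rpow two_pos (by norm_num) (by positivity), hsum_top,
    hρ i, hρmin i hi hiK, one_add_div_div_rpow_eq (by positivity)]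
end

section
/- Let K ≥ 1, r_min ≥ 0, θ = 2^{r_min} − 1, Ψ > 0, let λ_1, …, λ_K be positive reals, let ρ_{1,min}, …, ρ_{K,min} satisfy ρ_{i,min} = θ·(Σ_{j=1}^{i-1} ρ_{j,min} + Ψ/λ_i), let Δρ_1, …, Δρ_K be nonnegative reals, and set ρ_j = ρ_{j,min} + Δρ_j. Define ρ_j^e = (Δρ_j − θ·Σ_{k=1}^{j-1} Δρ_k)·2^{(K-j)·r_min} and n_i^e = (Ψ/λ_i + Σ_{j=1}^{i} ρ_{j,min})·2^{(K-i)·r_min}. Then for every i, log₂(1 + ρ_i λ_i/(Σ_{j=1}^{i-1} ρ_j λ_i + Ψ)) − r_min = log₂(1 + ρ_i^e / (n_i^e + Σ_{j=1}^{i-1} ρ_j^e)). -/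
/-!
With `E = 2 ^ r_min`, `S = Σ_{j<i} ρ_{j,min}`, `D = Σ_{j<i} Δρ_j` and `a = Ψ / λ_i`, the recursion
for `ρ_{i,min}` gives `S + ρ_{i,min} + a = E (S + a)`, and the partial sums of `ρ^e` telescope to
`Σ_{j<i} ρ_j^e = D · E^{K-i+1}`. After cancelling the common factor `E^{K-i}`, both arguments of
the logarithms share the numerator `E (S + a) + D + Δρ_i`, while the denominators are `S + D + a`
and `E (S + D + a)`; their ratio `E` accounts for the `r_min`.
-/

open Finset

theorem sum_Icc_one_eq_sum_Icc_pred_add {M : Type*} [AddCommMonoid M] (f : ℕ → M) {i : ℕ}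
    (hi : 1 ≤ i) : ∑ j ∈ Icc 1 i, f j = ∑ j ∈ Icc 1 (i - 1), f j + f i := by
  obtain ⟨n, rfl⟩ := Nat.exists_eq_add_of_le' hi
  rw [sum_Icc_succ_top (by omega), Nat.add_sub_cancel]

theorem sum_Icc_pred_nonneg {K i : ℕ} (hi : i ≤ K) {f : ℕ → ℝ}
    (hf : ∀ j, 1 ≤ j → j ≤ K → 0 ≤ f j) : 0 ≤ ∑ j ∈ Icc 1 (i - 1), f j :=
  sum_nonneg fun j hj => by
    rw [mem_Icc] at hj
    exact hf j hj.1 (by omega)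

theorem nonneg_of_eq_mul_sum_Icc_add {θ : ℝ} (hθ : 0 ≤ θ) {K : ℕ} {x b : ℕ → ℝ}
    (hb : ∀ i, 1 ≤ i → i ≤ K → 0 ≤ b i)
    (hx : ∀ i, 1 ≤ i → i ≤ K → x i = θ * (∑ j ∈ Icc 1 (i - 1), x j + b i)) :
    ∀ i, 1 ≤ i → i ≤ K → 0 ≤ x i := by
  intro i
  induction i using Nat.strong_induction_on with
  | _ i ih =>
    intro hi hiK
    rw [hx i hi hiK]
    refine mul_nonneg hθ (add_nonneg (sum_nonneg fun j hj => ?_) (hb i hi hiK))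
    rw [mem_Icc] at hj
    exact ih j (by omega) hj.1 (by omega)

/-- The `j`-th summand is `D_j E^(K-j) - D_(j-1) E^(K-j+1)` with `D_j = Σ_{k ≤ j} Δ k`. -/
theorem sum_Icc_sub_mul_pow_telescope {R : Type*} [CommRing R] (E : R) (Δ : ℕ → R) {K n : ℕ}
    (hn : n ≤ K) :
    ∑ j ∈ Icc 1 n, (Δ j - (E - 1) * ∑ k ∈ Icc 1 (j - 1), Δ k) * E ^ (K - j)
      = (∑ j ∈ Icc 1 n, Δ j) * E ^ (K - n) := by
  induction n with
  | zero => simp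
  | succ n ih =>
    have hpow : E ^ (K - n) = E * E ^ (K - (n + 1)) := by
      rw [← pow_succ']
      congr 1
      omega
    rw [sum_Icc_succ_top (by omega), sum_Icc_succ_top (by omega), ih (by omega), hpow,
      Nat.add_sub_cancel]
    ring

theorem Real.logb_div_rpow_self {b x : ℝ} (hb : 0 < b) (hb1 : b ≠ 1) (hx : x ≠ 0) (r : ℝ) :
    Real.logb b (x / b ^ r) = Real.logb b x - r := by
  rw [Real.logb_div hx (Real.rpow_pos_of_pos hb r).ne', Real.logb_rpow hb hb1]

theorem stmt_6_general (K : ℕ) (rmin : ℝ) (hr : 0 ≤ rmin) (Ψ : ℝ) (hΨ : 0 < Ψ)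
    (lam : ℕ → ℝ) (hlam : ∀ i, 1 ≤ i → i ≤ K → 0 < lam i)
    (ρmin : ℕ → ℝ)
    (hρmin : ∀ i, 1 ≤ i → i ≤ K →
      ρmin i = ((2:ℝ) ^ rmin - 1) * (∑ j ∈ Finset.Icc 1 (i - 1), ρmin j + Ψ / lam i))
    (Δρ : ℕ → ℝ) (hΔ : ∀ i, 1 ≤ i → i ≤ K → 0 ≤ Δρ i)
    (ρ : ℕ → ℝ) (hρ : ∀ j, ρ j = ρmin j + Δρ j)
    (ρe : ℕ → ℝ)
    (hρe : ∀ j, ρe j = (Δρ j - ((2:ℝ) ^ rmin - 1) * ∑ k ∈ Finset.Icc 1 (j - 1), Δρ k)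
        * (2:ℝ) ^ (((K - j : ℕ) : ℝ) * rmin))
    (nE : ℕ → ℝ)
    (hnE : ∀ i, nE i = (Ψ / lam i + ∑ j ∈ Finset.Icc 1 i, ρmin j)
        * (2:ℝ) ^ (((K - i : ℕ) : ℝ) * rmin)) :
    ∀ i, 1 ≤ i → i ≤ K →
      Real.logb 2 (1 + ρ i * lam i / (∑ j ∈ Finset.Icc 1 (i - 1), ρ j * lam i + Ψ)) - rmin
        = Real.logb 2 (1 + ρe i / (nE i + ∑ j ∈ Finset.Icc 1 (i - 1), ρe j)) := by
  intro i hi hiK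
  set E : ℝ := 2 ^ rmin
  have hE : 1 ≤ E := Real.one_le_rpow one_le_two hr
  have hpow (j : ℕ) : (2:ℝ) ^ (((K - j : ℕ) : ℝ) * rmin) = E ^ (K - j) := by
    rw [mul_comm, Real.rpow_mul_natCast zero_le_two]
  set a := Ψ / lam i
  set S := ∑ j ∈ Icc 1 (i - 1), ρmin j
  set D := ∑ j ∈ Icc 1 (i - 1), Δρ j
  have hlam_i : 0 < lam i := hlam i hi hiK
  have ha : 0 < a := div_pos hΨ hlam_i
  have hS : 0 ≤ S := sum_Icc_pred_nonneg hiK <| nonneg_of_eq_mul_sum_Icc_add (by linarith)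
    (fun j hj hjK => (div_pos hΨ (hlam j hj hjK)).le) hρmin
  have hD : 0 ≤ D := sum_Icc_pred_nonneg hiK hΔ
  have hΔ_i : 0 ≤ Δρ i := hΔ i hi hiK
  have hρmin_i : ρmin i = (E - 1) * (S + a) := hρmin i hi hiK
  have hunicast : 1 + ρ i * lam i / (∑ j ∈ Icc 1 (i - 1), ρ j * lam i + Ψ)
      = (E * (S + a) + D + Δρ i) / (S + D + a) := by
    have hΨa : Ψ = a * lam i := (div_mul_cancel₀ _ hlam_i.ne').symm
    have hρsum : ∑ j ∈ Icc 1 (i - 1), ρ j = S + D := by simp only [hρ, sum_add_distrib, S, D]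
    rw [← sum_mul, hΨa, ← add_mul, mul_div_mul_right _ _ hlam_i.ne', hρsum, hρ, hρmin_i]
    field_simp
    ring
  have heffective : 1 + ρe i / (nE i + ∑ j ∈ Icc 1 (i - 1), ρe j)
      = (E * (S + a) + D + Δρ i) / (E * (S + D + a)) := by
    have hρsum : ∑ j ∈ Icc 1 (i - 1), ρe j = D * (E * E ^ (K - i)) := by
      simp only [hρe, hpow]
      rw [sum_Icc_sub_mul_pow_telescope E Δρ (by omega), ← pow_succ']
      congr 2
      omega
    have hnE_i : nE i = E * (S + a) * E ^ (K - i) := by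
      rw [hnE, hpow, sum_Icc_one_eq_sum_Icc_pred_add _ hi, hρmin_i]
      ring
    rw [hρe, hpow, hnE_i, hρsum]
    field_simp
    ring
  rw [hunicast, heffective, div_mul_eq_div_div_swap,
    Real.logb_div_rpow_self two_pos (by norm_num) (by positivity)]

/-- Proposition 1 (second part): the excess rate in terms of the normalized effective
excess SNRs `ρe` and effective noises `nE`. -/
theorem stmt_6 (K : ℕ) (hK : 1 ≤ K) (rmin : ℝ) (hr : 0 ≤ rmin) (Ψ : ℝ) (hΨ : 0 < Ψ)
    (lam : ℕ → ℝ) (hlam : ∀ i, 1 ≤ i → i ≤ K → 0 < lam i)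
    (ρmin : ℕ → ℝ)
    (hρmin : ∀ i, 1 ≤ i → i ≤ K →
      ρmin i = ((2:ℝ) ^ rmin - 1) * (∑ j ∈ Finset.Icc 1 (i - 1), ρmin j + Ψ / lam i))
    (Δρ : ℕ → ℝ) (hΔ : ∀ i, 1 ≤ i → i ≤ K → 0 ≤ Δρ i)
    (ρ : ℕ → ℝ) (hρ : ∀ j, ρ j = ρmin j + Δρ j)
    (ρe : ℕ → ℝ)
    (hρe : ∀ j, ρe j = (Δρ j - ((2:ℝ) ^ rmin - 1) * ∑ k ∈ Finset.Icc 1 (j - 1), Δρ k)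
        * (2:ℝ) ^ (((K - j : ℕ) : ℝ) * rmin))
    (nE : ℕ → ℝ)
    (hnE : ∀ i, nE i = (Ψ / lam i + ∑ j ∈ Finset.Icc 1 i, ρmin j)
        * (2:ℝ) ^ (((K - i : ℕ) : ℝ) * rmin)) :
    ∀ i, 1 ≤ i → i ≤ K →
      Real.logb 2 (1 + ρ i * lam i / (∑ j ∈ Finset.Icc 1 (i - 1), ρ j * lam i + Ψ)) - rmin
        = Real.logb 2 (1 + ρe i / (nE i + ∑ j ∈ Finset.Icc 1 (i - 1), ρe j)) :=
  stmt_6_general K rmin hr Ψ hΨ lam hlam ρmin hρmin Δρ hΔ ρ hρ ρe hρe nE hnE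
end

section
/- Let K ≥ 1, let Ψ > 0, let λ_1 ≥ λ_2 ≥ ⋯ ≥ λ_K > 0, let ρ_{1,min}, …, ρ_{K,min} be nonnegative reals, and let Δρ ≥ 0. For any nonnegative reals Δρ_1, …, Δρ_K with Σ_{i=1}^{K} Δρ_i = Δρ, setting ρ_i = ρ_{i,min} + Δρ_i, the unicast sum rate Σ_{i=1}^{K} log₂(1 + ρ_i λ_i / (Σ_{j=1}^{i-1} ρ_j λ_i + Ψ)) is at most its value at the allocation Δρ_1 = Δρ and Δρ_i = 0 for i ≥ 2, i.e., at most Σ_{i=1}^{K} log₂(1 + ρ̃_i λ_i / (Σ_{j=1}^{i-1} ρ̃_j λ_i + Ψ)) where ρ̃_1 = ρ_{1,min} + Δρ and ρ̃_i = ρ_{i,min} for i ≥ 2. -/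
/-!
With the cumulative SNR `S i = ρ_1 + ⋯ + ρ_i`, the rate of user `i` is
`log₂ (S i λ_i + Ψ) - log₂ (S (i-1) λ_i + Ψ)`. Summing by parts, the sum rate becomes
`log₂ (S K λ_K + Ψ) - log₂ Ψ + Σ_{i<K} log₂ ((S i λ_i + Ψ) / (S i λ_{i+1} + Ψ))`, and since
`λ_{i+1} ≤ λ_i` every term is nondecreasing in the corresponding `S i`. Giving all the excess
SNR to user 1 makes every `S i` as large as the budget allows.
-/

open Finset Real

theorem sum_Icc_sub_eq_sub_add_sum_Ico {α M : Type*} [AddCommGroup M] (f : ℕ → α → M)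
    (S : ℕ → α) {K : ℕ} (hK : 1 ≤ K) :
    ∑ i ∈ Icc 1 K, (f i (S i) - f i (S (i - 1)))
      = f K (S K) - f 1 (S 0) + ∑ i ∈ Ico 1 K, (f i (S i) - f (i + 1) (S i)) := by
  induction K, hK using Nat.le_induction with
  | base => simp
  | succ n hn ih =>
    rw [sum_Icc_succ_top (by omega), ih, sum_Ico_succ_top hn, Nat.add_sub_cancel]
    abel

theorem logb_mul_add_sub_logb_mul_add_le {B Ψ a b x y : ℝ} (hB : 1 < B) (hΨ : 0 < Ψ)
    (hb : 0 ≤ b) (hba : b ≤ a) (hx : 0 ≤ x) (hxy : x ≤ y) :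
    logb B (x * a + Ψ) - logb B (x * b + Ψ) ≤ logb B (y * a + Ψ) - logb B (y * b + Ψ) := by
  have ha : 0 ≤ a := hb.trans hba
  have hy : 0 ≤ y := hx.trans hxy
  rw [← logb_div (by positivity) (by positivity), ← logb_div (by positivity) (by positivity)]
  apply logb_le_logb_of_le hB (by positivity)
  rw [div_le_div_iff₀ (by positivity) (by positivity)]
  -- after cross-multiplying, the two sides differ by `Ψ (y - x) (a - b)`
  nlinarith [mul_nonneg hΨ.le (mul_nonneg (sub_nonneg.2 hxy) (sub_nonneg.2 hba))]

noncomputable def unicastRate (Ψ : ℝ) (lam ρ : ℕ → ℝ) (i : ℕ) : ℝ :=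
  logb 2 (1 + ρ i * lam i / (∑ j ∈ Icc 1 (i - 1), ρ j * lam i + Ψ))

theorem unicastRate_eq_sub {Ψ : ℝ} (hΨ : 0 < Ψ) {lam ρ : ℕ → ℝ} {i : ℕ} (hi : 1 ≤ i)
    (hlam : 0 ≤ lam i) (hprev : 0 ≤ ∑ j ∈ Icc 1 (i - 1), ρ j)
    (hcur : 0 ≤ ∑ j ∈ Icc 1 i, ρ j) :
    unicastRate Ψ lam ρ i = logb 2 ((∑ j ∈ Icc 1 i, ρ j) * lam i + Ψ)
      - logb 2 ((∑ j ∈ Icc 1 (i - 1), ρ j) * lam i + Ψ) := by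
  have hsplit : ∑ j ∈ Icc 1 i, ρ j = ∑ j ∈ Icc 1 (i - 1), ρ j + ρ i := by
    obtain ⟨k, rfl⟩ := Nat.exists_eq_add_of_le' hi
    exact sum_Icc_succ_top (by omega) ρ
  have hden : 0 < (∑ j ∈ Icc 1 (i - 1), ρ j) * lam i + Ψ := by positivity
  rw [unicastRate, ← sum_mul, ← logb_div (by positivity) hden.ne', hsplit]
  congr 1
  field_simp
  ring

theorem sum_unicastRate_eq {Ψ : ℝ} (hΨ : 0 < Ψ) {lam ρ : ℕ → ℝ} {K : ℕ} (hK : 1 ≤ K)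
    (hlam : ∀ i ∈ Icc 1 K, 0 ≤ lam i) (hρ : ∀ n ≤ K, 0 ≤ ∑ j ∈ Icc 1 n, ρ j) :
    ∑ i ∈ Icc 1 K, unicastRate Ψ lam ρ i
      = logb 2 ((∑ j ∈ Icc 1 K, ρ j) * lam K + Ψ) - logb 2 Ψ
        + ∑ i ∈ Ico 1 K, (logb 2 ((∑ j ∈ Icc 1 i, ρ j) * lam i + Ψ)
            - logb 2 ((∑ j ∈ Icc 1 i, ρ j) * lam (i + 1) + Ψ)) := by
  rw [sum_congr rfl fun i hi => unicastRate_eq_sub hΨ (mem_Icc.1 hi).1 (hlam i hi)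
    (hρ _ (by grind)) (hρ _ (mem_Icc.1 hi).2)]
  simpa using sum_Icc_sub_eq_sub_add_sum_Ico (fun i s => logb 2 (s * lam i + Ψ))
    (fun n => ∑ j ∈ Icc 1 n, ρ j) hK

theorem sum_unicastRate_le_of_sum_le {Ψ : ℝ} (hΨ : 0 < Ψ) {lam ρ ρ' : ℕ → ℝ} {K : ℕ}
    (hK : 1 ≤ K) (hlam : ∀ i ∈ Icc 1 K, 0 ≤ lam i) (hanti : AntitoneOn lam (Icc 1 K))
    (hρ : ∀ n ≤ K, 0 ≤ ∑ j ∈ Icc 1 n, ρ j)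
    (hle : ∀ n ≤ K, ∑ j ∈ Icc 1 n, ρ j ≤ ∑ j ∈ Icc 1 n, ρ' j) :
    ∑ i ∈ Icc 1 K, unicastRate Ψ lam ρ i ≤ ∑ i ∈ Icc 1 K, unicastRate Ψ lam ρ' i := by
  have hρ' : ∀ n ≤ K, 0 ≤ ∑ j ∈ Icc 1 n, ρ' j := fun n hn => (hρ n hn).trans (hle n hn)
  have hlamK := hlam K (right_mem_Icc.2 hK)
  rw [sum_unicastRate_eq hΨ hK hlam hρ, sum_unicastRate_eq hΨ hK hlam hρ']
  refine add_le_add (sub_le_sub_right ?_ _) (sum_le_sum fun i hi => ?_)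
  · exact logb_le_logb_of_le one_lt_two (by have := hρ K le_rfl; positivity)
      (by linarith [mul_le_mul_of_nonneg_right (hle K le_rfl) hlamK])
  · obtain ⟨hi1, hiK⟩ := mem_Ico.1 hi
    exact logb_mul_add_sub_logb_mul_add_le one_lt_two hΨ
      (hlam (i + 1) (mem_Icc.2 ⟨by omega, hiK⟩))
      (hanti (mem_Icc.2 ⟨hi1, hiK.le⟩) (mem_Icc.2 ⟨by omega, hiK⟩) (by omega))
      (hρ i hiK.le) (hle i hiK.le)

theorem sum_Icc_ite_one_eq_sum_add (ρmin : ℕ → ℝ) (Δ : ℝ) {n : ℕ} (hn : 1 ≤ n) :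
    ∑ j ∈ Icc 1 n, (if j = 1 then ρmin 1 + Δ else ρmin j) = ∑ j ∈ Icc 1 n, ρmin j + Δ := by
  rw [← add_sum_erase _ _ (left_mem_Icc.2 hn), ← add_sum_erase _ _ (left_mem_Icc.2 hn),
    if_pos rfl, sum_congr rfl fun j hj => if_neg (ne_of_mem_erase hj)]
  ring

theorem stmt_7_general (K : ℕ) (hK : 1 ≤ K) (Ψ : ℝ) (hΨ : 0 < Ψ)
    (lam : ℕ → ℝ) (hlampos : ∀ i, 1 ≤ i → i ≤ K → 0 < lam i)
    (hlamsort : ∀ i j, 1 ≤ i → i ≤ j → j ≤ K → lam j ≤ lam i)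
    (ρmin : ℕ → ℝ) (hρmin : ∀ i, 1 ≤ i → i ≤ K → 0 ≤ ρmin i)
    (Δρtot : ℝ)
    (Δρ : ℕ → ℝ) (hΔ : ∀ i, 1 ≤ i → i ≤ K → 0 ≤ Δρ i)
    (hsum : ∑ i ∈ Finset.Icc 1 K, Δρ i = Δρtot) :
    (∑ i ∈ Finset.Icc 1 K, Real.logb 2 (1 + (ρmin i + Δρ i) * lam i /
        (∑ j ∈ Finset.Icc 1 (i - 1), (ρmin j + Δρ j) * lam i + Ψ)))
      ≤ ∑ i ∈ Finset.Icc 1 K, Real.logb 2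
          (1 + (if i = 1 then ρmin 1 + Δρtot else ρmin i) * lam i /
            (∑ j ∈ Finset.Icc 1 (i - 1),
                (if j = 1 then ρmin 1 + Δρtot else ρmin j) * lam i + Ψ)) := by
  have hΔsum_le : ∀ n ≤ K, ∑ j ∈ Icc 1 n, Δρ j ≤ Δρtot := fun n hn =>
    hsum ▸ sum_le_sum_of_subset_of_nonneg (Icc_subset_Icc_right hn)
      fun j hj _ => hΔ j (mem_Icc.1 hj).1 (mem_Icc.1 hj).2
  refine sum_unicastRate_le_of_sum_le (ρ := fun i => ρmin i + Δρ i)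
    (ρ' := fun i => if i = 1 then ρmin 1 + Δρtot else ρmin i) hΨ hK
    (fun i hi => (hlampos i (mem_Icc.1 hi).1 (mem_Icc.1 hi).2).le)
    (fun i hi j hj hij => hlamsort i j (mem_Icc.1 hi).1 hij (mem_Icc.1 hj).2)
    (fun n hn => sum_nonneg fun j hj => ?_) (fun n hn => ?_)
  · obtain ⟨hj1, hjn⟩ := mem_Icc.1 hj
    exact add_nonneg (hρmin j hj1 (hjn.trans hn)) (hΔ j hj1 (hjn.trans hn))
  · rcases Nat.eq_zero_or_pos n with rfl | hn1
    · simp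
    · rw [sum_Icc_ite_one_eq_sum_add ρmin Δρtot hn1, sum_add_distrib]
      linarith [hΔsum_le n hn]

/-- Proposition 2: the unicast sum rate is maximized by allocating all excess power to
the strongest user `U_1`. -/
theorem stmt_7 (K : ℕ) (hK : 1 ≤ K) (Ψ : ℝ) (hΨ : 0 < Ψ)
    (lam : ℕ → ℝ) (hlampos : ∀ i, 1 ≤ i → i ≤ K → 0 < lam i)
    (hlamsort : ∀ i j, 1 ≤ i → i ≤ j → j ≤ K → lam j ≤ lam i)
    (ρmin : ℕ → ℝ) (hρmin : ∀ i, 1 ≤ i → i ≤ K → 0 ≤ ρmin i)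
    (Δρtot : ℝ) (hΔtot : 0 ≤ Δρtot)
    (Δρ : ℕ → ℝ) (hΔ : ∀ i, 1 ≤ i → i ≤ K → 0 ≤ Δρ i)
    (hsum : ∑ i ∈ Finset.Icc 1 K, Δρ i = Δρtot) :
    (∑ i ∈ Finset.Icc 1 K, Real.logb 2 (1 + (ρmin i + Δρ i) * lam i /
        (∑ j ∈ Finset.Icc 1 (i - 1), (ρmin j + Δρ j) * lam i + Ψ)))
      ≤ ∑ i ∈ Finset.Icc 1 K, Real.logb 2
          (1 + (if i = 1 then ρmin 1 + Δρtot else ρmin i) * lam i /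
            (∑ j ∈ Finset.Icc 1 (i - 1),
                (if j = 1 then ρmin 1 + Δρtot else ρmin j) * lam i + Ψ)) :=
  stmt_7_general K hK Ψ hΨ lam hlampos hlamsort ρmin hρmin Δρtot Δρ hΔ hsum
end

section
/- Let R_M > 0, set θ_M = 2^{R_M} − 1, let Ψ > 0, Ω > 0, 0 < δ < 1, and let ρ > 0, ρ_U ≥ 0 with ρ_U < ρ/2^{R_M}, and set ρ_M = ρ − ρ_U. Then 1 − exp(−Ψ·θ_M/((ρ_M − θ_M·ρ_U)·Ω)) ≤ δ if and only if ρ_U ≤ Ψ·θ_M/(2^{R_M}·Ω·ln(1−δ)) + ρ/2^{R_M}. -/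
/-- Equivalence of the multicast outage constraint (4a) and the linear power
constraint (5a). -/
theorem stmt_13 (RM : ℝ) (hRM : 0 < RM) (Ψ Ω δ ρ ρU : ℝ) (hΨ : 0 < Ψ) (hΩ : 0 < Ω)
    (hδ0 : 0 < δ) (hδ1 : δ < 1) (hρ : 0 < ρ) (hρU : 0 ≤ ρU)
    (hlt : ρU < ρ / (2:ℝ) ^ RM) (ρM : ℝ) (hρM : ρM = ρ - ρU) :
    (1 - Real.exp (-(Ψ * ((2:ℝ) ^ RM - 1)) / ((ρM - ((2:ℝ) ^ RM - 1) * ρU) * Ω)) ≤ δ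
      ↔ ρU ≤ Ψ * ((2:ℝ) ^ RM - 1) / ((2:ℝ) ^ RM * Ω * Real.log (1 - δ))
          + ρ / (2:ℝ) ^ RM) := by
  have hδ' : 0 < 1 - δ := by linarith
  have h2p : (0:ℝ) < (2:ℝ) ^ RM := Real.rpow_pos_of_pos (by norm_num) _
  have h2 : (1:ℝ) < (2:ℝ) ^ RM :=
    Real.one_lt_rpow_iff_of_pos (by norm_num) |>.mpr (Or.inl ⟨by norm_num, hRM⟩)
  have hL : Real.log (1 - δ) < 0 := Real.log_neg hδ' (by linarith)
  have hmul : (2:ℝ) ^ RM * ρU < ρ := by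
    have := (lt_div_iff₀ h2p).mp hlt; linarith [mul_comm ρU ((2:ℝ)^RM)]
  have hden : 0 < (ρM - ((2:ℝ) ^ RM - 1) * ρU) * Ω := by
    subst hρM; nlinarith
  have hneg : (2:ℝ) ^ RM * Ω * Real.log (1 - δ) < 0 :=
    mul_neg_of_pos_of_neg (mul_pos h2p hΩ) hL
  rw [sub_le_iff_le_add, ← sub_le_iff_le_add', ← Real.log_le_iff_le_exp hδ',
    le_div_iff₀ hden, ← sub_le_iff_le_add, le_div_iff_of_neg hneg]
  subst hρM
  have key : (ρU - ρ / (2:ℝ) ^ RM) * ((2:ℝ) ^ RM * Ω * Real.log (1 - δ))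
      = -(Real.log (1 - δ) * ((ρ - ρU - ((2:ℝ) ^ RM - 1) * ρU) * Ω)) := by
    field_simp
    ring
  rw [key]
  constructor <;> intro h <;> linarith
end

section
/- Let Ψ > 0, let λ_a ≥ λ_b > 0, let ρ_U ≥ 0, and define f(ρ_1) = log₂(1 + ρ_1·λ_a/Ψ) + log₂(1 + (ρ_U − ρ_1)·λ_b/(ρ_1·λ_b + Ψ)) for ρ_1 ∈ [0, ρ_U]. Then f is monotone nondecreasing on [0, ρ_U]; in particular f(ρ_1) ≤ f(ρ_U) for all ρ_1 ∈ [0, ρ_U]. -/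
/-- Two-user core of Proposition 2: shifting power to the stronger user does not
decrease the two-user NOMA sum rate. -/
theorem stmt_15 (Ψ lamA lamB ρU : ℝ) (hΨ : 0 < Ψ) (hlamB : 0 < lamB) (hab : lamB ≤ lamA)
    (hρU : 0 ≤ ρU) :
    MonotoneOn (fun ρ1 => Real.logb 2 (1 + ρ1 * lamA / Ψ)
        + Real.logb 2 (1 + (ρU - ρ1) * lamB / (ρ1 * lamB + Ψ))) (Set.Icc 0 ρU)
    ∧ ∀ ρ1 ∈ Set.Icc (0:ℝ) ρU,
        Real.logb 2 (1 + ρ1 * lamA / Ψ)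
            + Real.logb 2 (1 + (ρU - ρ1) * lamB / (ρ1 * lamB + Ψ))
          ≤ Real.logb 2 (1 + ρU * lamA / Ψ)
            + Real.logb 2 (1 + (ρU - ρU) * lamB / (ρU * lamB + Ψ)) := by
  have hlamA : 0 < lamA := lt_of_lt_of_le hlamB hab
  have key : MonotoneOn (fun ρ1 => Real.logb 2 (1 + ρ1 * lamA / Ψ)
        + Real.logb 2 (1 + (ρU - ρ1) * lamB / (ρ1 * lamB + Ψ))) (Set.Icc 0 ρU) := by
    intro x hx y hy hxy
    have hx0 : (0:ℝ) ≤ x := hx.1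
    have hy0 : (0:ℝ) ≤ y := hy.1
    have hxd : 0 < x * lamB + Ψ := by positivity
    have hyd : 0 < y * lamB + Ψ := by positivity
    have e1 : ∀ t : ℝ, 1 + t * lamA / Ψ = (Ψ + t * lamA) / Ψ := by
      intro t; field_simp
    have e2 : ∀ t : ℝ, 0 ≤ t → 1 + (ρU - t) * lamB / (t * lamB + Ψ)
        = (ρU * lamB + Ψ) / (t * lamB + Ψ) := by
      intro t ht
      have htd : 0 < t * lamB + Ψ := by positivity
      field_simp
      ring
    simp only [e1, e2 x hx0, e2 y hy0]
    have hxn : 0 < Ψ + x * lamA := by positivity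
    have hyn : 0 < Ψ + y * lamA := by positivity
    have hun : 0 < ρU * lamB + Ψ := by positivity
    rw [← Real.logb_mul (by positivity) (by positivity),
        ← Real.logb_mul (by positivity) (by positivity)]
    apply Real.logb_le_logb_of_le one_lt_two (by positivity)
    rw [div_mul_div_comm, div_mul_div_comm, div_le_div_iff₀ (by positivity) (by positivity)]
    nlinarith [mul_nonneg (mul_nonneg (mul_nonneg hΨ.le hΨ.le) hun.le)
      (mul_nonneg (sub_nonneg.2 hxy) (sub_nonneg.2 hab))]
  refine ⟨key, fun ρ1 h1 => key h1 (Set.right_mem_Icc.2 hρU) h1.2⟩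
end
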